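/- arXiv:2304.04882 — 4 statements merged into one kernel-verified Lean document; each statement's English description precedes it below -/
import Mathlib

section
/- Let X be a real normed space, K ⊆ X a set, ū ∈ K, and J : X → ℝ a function that is twice differentiable along segments in the following sense: for all u ∈ K there exists θ ∈ [0,1] with J(u) − J(ū) = J'(ū)(u−ū) + (1/2)·J''(ū + θ(u−ū))(u−ū)². Suppose further that for every ε > 0 there exists δ > 0 such that |J''(ū)(u−ū)² − J''(ū+θ(u−ū))(u−ū)²| ≤ ε·‖u−ū‖^{1+1/γ} for all u ∈ K with ‖u−ū‖ < δ and all θ ∈ [0,1], where γ ∈ (0,1] is fixed. Then the following are equivalent: (1) there exist c, α > 0 such that J'(ū)(u−ū) + (1/2)·J''(ū)(u−ū)² ≥ c·‖u−ū‖^{1+1/γ} for all u ∈ K with ‖u−ū‖ < α; (2) there exist c, α > 0 such that J(u) − J(ū) ≥ c·‖u−ū‖^{1+1/γ} for all u ∈ K with ‖u−ū‖ < α. -/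
open Filter Topology

/-! Along the Taylor expansion, `J u - J ū` and `J'(ū)(u - ū) + ½ J''(ū)(u - ū)²` differ by
`½ (J''(ū) - J''(ū + θ(u - ū)))(u - ū)²`, which is `o(‖u - ū‖^(1 + 1/γ))` as `u → ū` in `K`.
A perturbation that is small compared to the growth rate cannot destroy growth at that rate:
a lower bound `c ‖u - ū‖^(1 + 1/γ)` for one side gives `(c/2) ‖u - ū‖^(1 + 1/γ)` for the other. -/

theorem exists_pos_mul_le_of_abs_sub_le {α : Type*} {l : Filter α} {f g w : α → ℝ}
    (hfg : ∀ ε > 0, ∀ᶠ x in l, |f x - g x| ≤ ε * w x)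
    (hf : ∃ c > 0, ∀ᶠ x in l, c * w x ≤ f x) :
    ∃ c > 0, ∀ᶠ x in l, c * w x ≤ g x := by
  obtain ⟨c, hc, hcf⟩ := hf
  refine ⟨c / 2, half_pos hc, ?_⟩
  filter_upwards [hcf, hfg (c / 2) (half_pos hc)] with x hcfx hfgx
  linarith [le_abs_self (f x - g x)]

theorem exists_pos_mul_le_iff_of_abs_sub_le {α : Type*} {l : Filter α} {f g w : α → ℝ}
    (hfg : ∀ ε > 0, ∀ᶠ x in l, |f x - g x| ≤ ε * w x) :
    (∃ c > 0, ∀ᶠ x in l, c * w x ≤ f x) ↔ ∃ c > 0, ∀ᶠ x in l, c * w x ≤ g x :=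
  ⟨exists_pos_mul_le_of_abs_sub_le hfg,
    exists_pos_mul_le_of_abs_sub_le fun ε hε => (hfg ε hε).mono fun _ h => by rwa [abs_sub_comm]⟩

theorem eventually_nhdsWithin_iff_norm_sub_lt {X : Type*} [SeminormedAddCommGroup X]
    {K : Set X} {x : X} {p : X → Prop} :
    (∀ᶠ u in 𝓝[K] x, p u) ↔ ∃ α > 0, ∀ u ∈ K, ‖u - x‖ < α → p u := by
  simp only [eventually_nhdsWithin_iff, Metric.eventually_nhds_iff, dist_eq_norm]
  exact exists_congr fun α => and_congr_right fun _ =>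
    ⟨fun h u hu hlt => h hlt hu, fun h u hlt hu => h u hu hlt⟩

theorem stmt_0_general {X : Type*} [NormedAddCommGroup X] [NormedSpace ℝ X]
    (K : Set X) (ubar : X) (γ : ℝ)
    (J : X → ℝ) (J' : X → X → ℝ) (J'' : X → X → ℝ)
    (hTaylor : ∀ u ∈ K, ∃ θ ∈ Set.Icc (0:ℝ) 1,
      J u - J ubar = J' ubar (u - ubar) + (1/2) * J'' (ubar + θ • (u - ubar)) (u - ubar))
    (hCont : ∀ ε > (0:ℝ), ∃ δ > (0:ℝ), ∀ u ∈ K, ‖u - ubar‖ < δ → ∀ θ ∈ Set.Icc (0:ℝ) 1,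
      |J'' ubar (u - ubar) - J'' (ubar + θ • (u - ubar)) (u - ubar)|
        ≤ ε * ‖u - ubar‖ ^ (1 + 1/γ)) :
    (∃ c > (0:ℝ), ∃ α > (0:ℝ), ∀ u ∈ K, ‖u - ubar‖ < α →
        J' ubar (u - ubar) + (1/2) * J'' ubar (u - ubar) ≥ c * ‖u - ubar‖ ^ (1 + 1/γ))
    ↔
    (∃ c > (0:ℝ), ∃ α > (0:ℝ), ∀ u ∈ K, ‖u - ubar‖ < α →
        J u - J ubar ≥ c * ‖u - ubar‖ ^ (1 + 1/γ)) := by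
  have hclose : ∀ ε > 0, ∀ᶠ u in 𝓝[K] ubar,
      |(J' ubar (u - ubar) + (1/2) * J'' ubar (u - ubar)) - (J u - J ubar)|
        ≤ ε * ‖u - ubar‖ ^ (1 + 1/γ) := by
    intro ε hε
    obtain ⟨δ, hδ, hJ''⟩ := hCont (2 * ε) (by positivity)
    refine eventually_nhdsWithin_iff_norm_sub_lt.2 ⟨δ, hδ, fun u hu hlt => ?_⟩
    obtain ⟨θ, hθ, hJ⟩ := hTaylor u hu
    calc _ = |(1/2) * (J'' ubar (u - ubar) - J'' (ubar + θ • (u - ubar)) (u - ubar))| := by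
          rw [hJ]; congr 1; ring
      _ = (1/2) * |J'' ubar (u - ubar) - J'' (ubar + θ • (u - ubar)) (u - ubar)| := by
          rw [abs_mul, abs_of_pos one_half_pos]
      _ ≤ ε * ‖u - ubar‖ ^ (1 + 1/γ) := by linarith [hJ'' u hu hlt θ hθ]
  simpa only [ge_iff_le, ← eventually_nhdsWithin_iff_norm_sub_lt]
    using exists_pos_mul_le_iff_of_abs_sub_le hclose

theorem stmt_0 {X : Type*} [NormedAddCommGroup X] [NormedSpace ℝ X]
    (K : Set X) (ubar : X) (hubar : ubar ∈ K) (γ : ℝ) (hγ : γ ∈ Set.Ioc (0:ℝ) 1)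
    (J : X → ℝ) (J' : X → X → ℝ) (J'' : X → X → ℝ)
    (hTaylor : ∀ u ∈ K, ∃ θ ∈ Set.Icc (0:ℝ) 1,
      J u - J ubar = J' ubar (u - ubar) + (1/2) * J'' (ubar + θ • (u - ubar)) (u - ubar))
    (hCont : ∀ ε > (0:ℝ), ∃ δ > (0:ℝ), ∀ u ∈ K, ‖u - ubar‖ < δ → ∀ θ ∈ Set.Icc (0:ℝ) 1,
      |J'' ubar (u - ubar) - J'' (ubar + θ • (u - ubar)) (u - ubar)|
        ≤ ε * ‖u - ubar‖ ^ (1 + 1/γ)) :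
    (∃ c > (0:ℝ), ∃ α > (0:ℝ), ∀ u ∈ K, ‖u - ubar‖ < α →
        J' ubar (u - ubar) + (1/2) * J'' ubar (u - ubar) ≥ c * ‖u - ubar‖ ^ (1 + 1/γ))
    ↔
    (∃ c > (0:ℝ), ∃ α > (0:ℝ), ∀ u ∈ K, ‖u - ubar‖ < α →
        J u - J ubar ≥ c * ‖u - ubar‖ ^ (1 + 1/γ)) :=
  stmt_0_general K ubar γ J J' J'' hTaylor hCont
end

section
/- Let X be a real normed space, K ⊆ X, ū ∈ K, γ ∈ (0,1], and J : X → ℝ with first variation J' and second variation J''. Assume the Taylor identity: for all u ∈ K there exists θ ∈ [0,1] with J'(u)(u−ū) − J'(ū)(u−ū) = J''(ū + θ(u−ū))(u−ū)². Assume also the continuity property: for every ε > 0 there exists δ > 0 such that |J''(ū)(u−ū)² − J''(ū+θ(u−ū))(u−ū)²| ≤ ε·‖u−ū‖^{1+1/γ} whenever u ∈ K, ‖u−ū‖ < δ, θ ∈ [0,1]. If there exist μ, β > 0 such that J'(u)(u−ū) ≥ μ·‖u−ū‖^{1+1/γ} for all u ∈ K with ‖u−ū‖ < β, then there exist c, α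 > 0 such that J'(ū)(u−ū) + J''(ū)(u−ū)² ≥ c·‖u−ū‖^{1+1/γ} for all u ∈ K with ‖u−ū‖ < α. -/
/-! By the Taylor identity, `J'(ū) + J''(ū) = J'(u) + (J''(ū) - J''(ū + θ(u - ū)))` along `u - ū`.
Coercivity bounds the first term below by `μ‖u - ū‖^p`, and the continuity property with
`ε = μ / 2` bounds the second below by `-(μ / 2)‖u - ū‖^p`. -/

lemma half_le_add_of_sub_eq_of_abs_sub_le {μ r a a₀ b b₀ : ℝ} (hgrow : μ * r ≤ a)
    (htaylor : a - a₀ = b) (hcont : |b₀ - b| ≤ μ / 2 * r) :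
    μ / 2 * r ≤ a₀ + b₀ := by
  linarith [(abs_le.mp hcont).1]

theorem stmt_1_general {X : Type*} [NormedAddCommGroup X] [NormedSpace ℝ X]
    (K : Set X) (ubar : X) (γ : ℝ)
    (J' : X → X → ℝ) (J'' : X → X → ℝ)
    (hTaylor : ∀ u ∈ K, ∃ θ ∈ Set.Icc (0:ℝ) 1,
      J' u (u - ubar) - J' ubar (u - ubar) = J'' (ubar + θ • (u - ubar)) (u - ubar))
    (hCont : ∀ ε > (0:ℝ), ∃ δ > (0:ℝ), ∀ u ∈ K, ‖u - ubar‖ < δ → ∀ θ ∈ Set.Icc (0:ℝ) 1,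
      |J'' ubar (u - ubar) - J'' (ubar + θ • (u - ubar)) (u - ubar)|
        ≤ ε * ‖u - ubar‖ ^ (1 + 1/γ))
    (μ β : ℝ) (hμ : 0 < μ) (hβ : 0 < β)
    (hgrow : ∀ u ∈ K, ‖u - ubar‖ < β → J' u (u - ubar) ≥ μ * ‖u - ubar‖ ^ (1 + 1/γ)) :
    ∃ c > (0:ℝ), ∃ α > (0:ℝ), ∀ u ∈ K, ‖u - ubar‖ < α →
      J' ubar (u - ubar) + J'' ubar (u - ubar) ≥ c * ‖u - ubar‖ ^ (1 + 1/γ) := by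
  obtain ⟨δ, hδ, hclose⟩ := hCont (μ / 2) (half_pos hμ)
  refine ⟨μ / 2, half_pos hμ, min β δ, lt_min hβ hδ, fun u hu hlt => ?_⟩
  obtain ⟨θ, hθ, htaylor⟩ := hTaylor u hu
  exact half_le_add_of_sub_eq_of_abs_sub_le
    (hgrow u hu (hlt.trans_le (min_le_left _ _))) htaylor
    (hclose u hu (hlt.trans_le (min_le_right _ _)) θ hθ)

theorem stmt_1 {X : Type*} [NormedAddCommGroup X] [NormedSpace ℝ X]
    (K : Set X) (ubar : X) (hubar : ubar ∈ K) (γ : ℝ) (hγ : γ ∈ Set.Ioc (0:ℝ) 1)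
    (J : X → ℝ) (J' : X → X → ℝ) (J'' : X → X → ℝ)
    (hTaylor : ∀ u ∈ K, ∃ θ ∈ Set.Icc (0:ℝ) 1,
      J' u (u - ubar) - J' ubar (u - ubar) = J'' (ubar + θ • (u - ubar)) (u - ubar))
    (hCont : ∀ ε > (0:ℝ), ∃ δ > (0:ℝ), ∀ u ∈ K, ‖u - ubar‖ < δ → ∀ θ ∈ Set.Icc (0:ℝ) 1,
      |J'' ubar (u - ubar) - J'' (ubar + θ • (u - ubar)) (u - ubar)|
        ≤ ε * ‖u - ubar‖ ^ (1 + 1/γ))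
    (μ β : ℝ) (hμ : 0 < μ) (hβ : 0 < β)
    (hgrow : ∀ u ∈ K, ‖u - ubar‖ < β → J' u (u - ubar) ≥ μ * ‖u - ubar‖ ^ (1 + 1/γ)) :
    ∃ c > (0:ℝ), ∃ α > (0:ℝ), ∀ u ∈ K, ‖u - ubar‖ < α →
      J' ubar (u - ubar) + J'' ubar (u - ubar) ≥ c * ‖u - ubar‖ ^ (1 + 1/γ) :=
  stmt_1_general K ubar γ J' J'' hTaylor hCont μ β hμ hβ hgrow
end

section
/- Let c > k > 0, τ > 0, d > 0, γ ∈ (0,1] be real numbers. Let K be a set, ū ∈ K, and suppose we are given functions F₁ : K → ℝ (the first variation u ↦ J'(ū)(u−ū)), F₂ : K → ℝ (the second variation u ↦ J''(ū)(u−ū)²), N : K → ℝ≥0 (u ↦ ‖u−ū‖_{L¹}), Z₁ : K → ℝ≥0 (u ↦ ‖z_{ū,u−ū}‖_{L¹}) and Z∞ : K → ℝ≥0 (u ↦ ‖z_{ū,u−ū}‖_{L∞}). Assume: (i) F₁(u) ≥ c·N(u)^{1+1/γ} for all u ∈ K; (ii) |F₂(u)| ≤ d·Z∞(u)·Z₁(u)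 for all u ∈ K; (iii) for every u in a subset G ⊆ K we have F₂(u) ≥ −k·N(u)^{1+1/γ}, and for every u ∈ K \ G we have F₁(u) > τ·Z₁(u). Then for every u ∈ K with d·Z∞(u) ≤ τ/2 it holds that F₁(u) + F₂(u) ≥ min(c−k, c/2)·N(u)^{1+1/γ}. -/
/-!
On the cone `G` the second variation loses at most `k · N u ^ (1 + 1/γ)` against the growth
`c · N u ^ (1 + 1/γ)` of the first variation. Off the cone the first variation exceeds `τ · Z₁ u`,
while the smallness of `d · Zinf u` bounds the second variation by `τ/2 · Z₁ u`, so it eats at most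
half of the first variation.
-/

lemma half_lt_add_of_abs_le {f₁ f₂ τ z : ℝ} (hf₁ : τ * z < f₁) (hf₂ : |f₂| ≤ τ / 2 * z) :
    f₁ / 2 < f₁ + f₂ := by
  linarith [neg_abs_le f₂]

theorem stmt_2_general {K : Type*} (c k τ d γ : ℝ)
    (F₁ F₂ N Z₁ Zinf : K → ℝ)
    (hN : ∀ u, 0 ≤ N u) (hZ₁ : ∀ u, 0 ≤ Z₁ u)
    (G : Set K)
    (h1 : ∀ u, F₁ u ≥ c * N u ^ (1 + 1/γ))
    (h2 : ∀ u, |F₂ u| ≤ d * Zinf u * Z₁ u)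
    (h3 : ∀ u ∈ G, F₂ u ≥ -k * N u ^ (1 + 1/γ))
    (h4 : ∀ u ∉ G, F₁ u > τ * Z₁ u) :
    ∀ u, d * Zinf u ≤ τ / 2 →
      F₁ u + F₂ u ≥ min (c - k) (c / 2) * N u ^ (1 + 1/γ) := by
  intro u hu
  have hpow : 0 ≤ N u ^ (1 + 1/γ) := Real.rpow_nonneg (hN u) _
  by_cases hG : u ∈ G
  · calc min (c - k) (c / 2) * N u ^ (1 + 1/γ) ≤ (c - k) * N u ^ (1 + 1/γ) := by
          gcongr; exact min_le_left _ _
      _ = c * N u ^ (1 + 1/γ) + -k * N u ^ (1 + 1/γ) := by ring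
      _ ≤ F₁ u + F₂ u := add_le_add (h1 u) (h3 u hG)
  · have hF₂ : |F₂ u| ≤ τ / 2 * Z₁ u := (h2 u).trans (mul_le_mul_of_nonneg_right hu (hZ₁ u))
    calc min (c - k) (c / 2) * N u ^ (1 + 1/γ) ≤ c / 2 * N u ^ (1 + 1/γ) := by
          gcongr; exact min_le_right _ _
      _ ≤ F₁ u / 2 := by linarith [h1 u]
      _ ≤ F₁ u + F₂ u := (half_lt_add_of_abs_le (h4 u hG) hF₂).le

theorem stmt_2 {K : Type*} (c k τ d γ : ℝ)
    (hck : k < c) (hk : 0 < k) (hτ : 0 < τ) (hd : 0 < d) (hγ : γ ∈ Set.Ioc (0:ℝ) 1)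
    (F₁ F₂ N Z₁ Zinf : K → ℝ)
    (hN : ∀ u, 0 ≤ N u) (hZ₁ : ∀ u, 0 ≤ Z₁ u) (hZinf : ∀ u, 0 ≤ Zinf u)
    (G : Set K)
    (h1 : ∀ u, F₁ u ≥ c * N u ^ (1 + 1/γ))
    (h2 : ∀ u, |F₂ u| ≤ d * Zinf u * Z₁ u)
    (h3 : ∀ u ∈ G, F₂ u ≥ -k * N u ^ (1 + 1/γ))
    (h4 : ∀ u ∉ G, F₁ u > τ * Z₁ u) :
    ∀ u, d * Zinf u ≤ τ / 2 →
      F₁ u + F₂ u ≥ min (c - k) (c / 2) * N u ^ (1 + 1/γ) :=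
  stmt_2_general c k τ d γ F₁ F₂ N Z₁ Zinf hN hZ₁ G h1 h2 h3 h4
end

section
/- Let X be a real normed space, K ⊆ X, ū ∈ K, γ ∈ (0,1], and J : X → ℝ. Assume the Taylor identity: for all u ∈ K there exists θ ∈ [0,1] with J(u) − J(ū) = J'(ū)(u−ū) + (1/2)·J''(ū+θ(u−ū))(u−ū)², and the continuity property: for every ε > 0 there is δ > 0 with |J''(ū)(u−ū)² − J''(ū+θ(u−ū))(u−ū)²| ≤ ε·‖u−ū‖^{1+1/γ} for ‖u−ū‖ < δ, θ ∈ [0,1]. If J'(ū)(u−ū) + (1/2)·J''(ū)(u−ū)² ≥ c·‖u−ū‖^{1+1/γ} for all u ∈ K with ‖u−ū‖ < α (with c, α > 0), then ū is a strict local minimizer of J on K: there exist c', α' > 0 with J(u) − J(ū) ≥ c'·‖u−ū‖^{1+1/γ} > 0 for all u ∈ K, u ≠ ū, with ‖u−ū‖ < α'. -/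
/-! Taking `ε = c` in the continuity hypothesis, replacing `J''(ū + θh)h²` by `J''(ū)h²` in the
Taylor identity costs at most `(c/2)‖h‖^p`, so half of the growth of the second-order model
survives for `J` itself. -/

theorem sub_ge_of_taylor_of_model_ge {Δ d q₀ q c ε r : ℝ} (hTaylor : Δ = d + 1 / 2 * q)
    (hmodel : d + 1 / 2 * q₀ ≥ c * r) (happrox : |q₀ - q| ≤ ε * r) :
    Δ ≥ (c - ε / 2) * r := by
  have := (abs_le.mp happrox).2
  rw [hTaylor]
  linarith

theorem exists_sub_ge_half_of_taylor_of_model_ge {X : Type*} [AddCommGroup X] [Module ℝ X]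
    [Norm X] {K : Set X} {ubar : X} {J : X → ℝ} {J' J'' : X → X → ℝ} {r : X → ℝ} {c α : ℝ}
    (hTaylor : ∀ u ∈ K, ∃ θ ∈ Set.Icc (0:ℝ) 1,
      J u - J ubar = J' ubar (u - ubar) + (1/2) * J'' (ubar + θ • (u - ubar)) (u - ubar))
    (hCont : ∃ δ > (0:ℝ), ∀ u ∈ K, ‖u - ubar‖ < δ → ∀ θ ∈ Set.Icc (0:ℝ) 1,
      |J'' ubar (u - ubar) - J'' (ubar + θ • (u - ubar)) (u - ubar)| ≤ c * r u)
    (hα : 0 < α)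
    (hmodel : ∀ u ∈ K, ‖u - ubar‖ < α →
      J' ubar (u - ubar) + (1/2) * J'' ubar (u - ubar) ≥ c * r u) :
    ∃ α' > (0:ℝ), ∀ u ∈ K, ‖u - ubar‖ < α' → J u - J ubar ≥ c / 2 * r u := by
  obtain ⟨δ, hδ, happrox⟩ := hCont
  refine ⟨min α δ, lt_min hα hδ, fun u hu hlt => ?_⟩
  obtain ⟨θ, hθ, hexpand⟩ := hTaylor u hu
  have hgrowth := sub_ge_of_taylor_of_model_ge hexpand
    (hmodel u hu (hlt.trans_le (min_le_left _ _)))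
    (happrox u hu (hlt.trans_le (min_le_right _ _)) θ hθ)
  linarith

theorem stmt_8_general {X : Type*} [NormedAddCommGroup X] [NormedSpace ℝ X]
    (K : Set X) (ubar : X) (γ : ℝ)
    (J : X → ℝ) (J' : X → X → ℝ) (J'' : X → X → ℝ)
    (hTaylor : ∀ u ∈ K, ∃ θ ∈ Set.Icc (0:ℝ) 1,
      J u - J ubar = J' ubar (u - ubar) + (1/2) * J'' (ubar + θ • (u - ubar)) (u - ubar))
    (hCont : ∀ ε > (0:ℝ), ∃ δ > (0:ℝ), ∀ u ∈ K, ‖u - ubar‖ < δ → ∀ θ ∈ Set.Icc (0:ℝ) 1,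
      |J'' ubar (u - ubar) - J'' (ubar + θ • (u - ubar)) (u - ubar)|
        ≤ ε * ‖u - ubar‖ ^ (1 + 1/γ))
    (c α : ℝ) (hc : 0 < c) (hα : 0 < α)
    (hgrow : ∀ u ∈ K, ‖u - ubar‖ < α →
      J' ubar (u - ubar) + (1/2) * J'' ubar (u - ubar) ≥ c * ‖u - ubar‖ ^ (1 + 1/γ)) :
    ∃ c' > (0:ℝ), ∃ α' > (0:ℝ), ∀ u ∈ K, u ≠ ubar → ‖u - ubar‖ < α' →
      J u - J ubar ≥ c' * ‖u - ubar‖ ^ (1 + 1/γ) ∧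
      0 < c' * ‖u - ubar‖ ^ (1 + 1/γ) := by
  obtain ⟨α', hα', hgrowth⟩ :=
    exists_sub_ge_half_of_taylor_of_model_ge hTaylor (hCont c hc) hα hgrow
  refine ⟨c / 2, half_pos hc, α', hα', fun u hu hne hlt => ⟨hgrowth u hu hlt, ?_⟩⟩
  have hdist : 0 < ‖u - ubar‖ := norm_pos_iff.mpr (sub_ne_zero.mpr hne)
  exact mul_pos (half_pos hc) (Real.rpow_pos_of_pos hdist _)

theorem stmt_8 {X : Type*} [NormedAddCommGroup X] [NormedSpace ℝ X]
    (K : Set X) (ubar : X) (hubar : ubar ∈ K) (γ : ℝ) (hγ : γ ∈ Set.Ioc (0:ℝ) 1)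
    (J : X → ℝ) (J' : X → X → ℝ) (J'' : X → X → ℝ)
    (hTaylor : ∀ u ∈ K, ∃ θ ∈ Set.Icc (0:ℝ) 1,
      J u - J ubar = J' ubar (u - ubar) + (1/2) * J'' (ubar + θ • (u - ubar)) (u - ubar))
    (hCont : ∀ ε > (0:ℝ), ∃ δ > (0:ℝ), ∀ u ∈ K, ‖u - ubar‖ < δ → ∀ θ ∈ Set.Icc (0:ℝ) 1,
      |J'' ubar (u - ubar) - J'' (ubar + θ • (u - ubar)) (u - ubar)|
        ≤ ε * ‖u - ubar‖ ^ (1 + 1/γ))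
    (c α : ℝ) (hc : 0 < c) (hα : 0 < α)
    (hgrow : ∀ u ∈ K, ‖u - ubar‖ < α →
      J' ubar (u - ubar) + (1/2) * J'' ubar (u - ubar) ≥ c * ‖u - ubar‖ ^ (1 + 1/γ)) :
    ∃ c' > (0:ℝ), ∃ α' > (0:ℝ), ∀ u ∈ K, u ≠ ubar → ‖u - ubar‖ < α' →
      J u - J ubar ≥ c' * ‖u - ubar‖ ^ (1 + 1/γ) ∧
      0 < c' * ‖u - ubar‖ ^ (1 + 1/γ) :=
  stmt_8_general K ubar γ J J' J'' hTaylor hCont c α hc hα hgrow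
end
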